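/- arXiv:1805.00318 — 3 statements merged into one kernel-verified Lean document; each statement's English description precedes it below -/
import Mathlib

section
/- If U, U' are c×c correlation matrices and V, V' are r×r correlation matrices with r, c ≥ 1, and U ⊗ V = U' ⊗ V', then U = U' and V = V'. -/
open Matrix
open scoped Kronecker

theorem kronecker_corr_factors_unique (c r : ℕ) (hc : 1 ≤ c) (hr : 1 ≤ r)
    (U U' : Matrix (Fin c) (Fin c) ℝ) (V V' : Matrix (Fin r) (Fin r) ℝ)
    (hU : U.PosDef) (hU' : U'.PosDef) (hV : V.PosDef) (hV' : V'.PosDef)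
    (hUd : ∀ i, U i i = 1) (hU'd : ∀ i, U' i i = 1)
    (hVd : ∀ j, V j j = 1) (hV'd : ∀ j, V' j j = 1)
    (heq : U ⊗ₖ V = U' ⊗ₖ V') :
    U = U' ∧ V = V' := by
  have i0 : Fin c := ⟨0, hc⟩
  have j0 : Fin r := ⟨0, hr⟩
  have h : ∀ i i' j j', U i i' * V j j' = U' i i' * V' j j' := by
    intro i i' j j'
    have := congrFun (congrFun heq (i, j)) (i', j')
    simpa [Matrix.kroneckerMap_apply] using this
  constructor
  · ext i i'
    have := h i i' j0 j0
    simpa [hVd j0, hV'd j0] using this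
  · ext j j'
    have := h i0 i0 j j'
    simpa [hUd i0, hU'd i0] using this
end

section
/- If the Kronecker product U ⊗ V of a c×c matrix U and an r×r matrix V is diagonal with positive diagonal entries, and both U and V are symmetric positive definite, then U and V are both diagonal with positive diagonal entries. -/
open Matrix
open scoped Kronecker

namespace Matrix

variable {α m n : Type*} [MulZeroClass α] [NoZeroDivisors α]

theorem IsDiag.of_kronecker_left {A : Matrix m m α} {B : Matrix n n α}
    (h : (A ⊗ₖ B).IsDiag) {j : n} (hj : B j j ≠ 0) : A.IsDiag := by
  intro i i' hii'
  have hentry : A i i' * B j j = 0 := h (i := (i, j)) (j := (i', j)) (by simp [hii'])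
  exact (mul_eq_zero.1 hentry).resolve_right hj

theorem IsDiag.of_kronecker_right {A : Matrix m m α} {B : Matrix n n α}
    (h : (A ⊗ₖ B).IsDiag) {i : m} (hi : A i i ≠ 0) : B.IsDiag := by
  intro j j' hjj'
  have hentry : A i i * B j j' = 0 := h (i := (i, j)) (j := (i, j')) (by simp [hjj'])
  exact (mul_eq_zero.1 hentry).resolve_left hi

end Matrix

theorem kronecker_diagonal_factors_general (c r : ℕ) (hc : 1 ≤ c) (hr : 1 ≤ r)
    (U : Matrix (Fin c) (Fin c) ℝ) (V : Matrix (Fin r) (Fin r) ℝ)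
    (hU : U.PosDef) (hV : V.PosDef)
    (hdiag : (U ⊗ₖ V).IsDiag) :
    U.IsDiag ∧ (∀ i, 0 < U i i) ∧ V.IsDiag ∧ (∀ j, 0 < V j j) :=
  ⟨hdiag.of_kronecker_left (j := ⟨0, hr⟩) hV.diag_pos.ne', fun _ ↦ hU.diag_pos,
    hdiag.of_kronecker_right (i := ⟨0, hc⟩) hU.diag_pos.ne', fun _ ↦ hV.diag_pos⟩

theorem kronecker_diagonal_factors (c r : ℕ) (hc : 1 ≤ c) (hr : 1 ≤ r)
    (U : Matrix (Fin c) (Fin c) ℝ) (V : Matrix (Fin r) (Fin r) ℝ)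
    (hU : U.PosDef) (hV : V.PosDef)
    (hdiag : (U ⊗ₖ V).IsDiag) (hpos : ∀ p, 0 < (U ⊗ₖ V) p p) :
    U.IsDiag ∧ (∀ i, 0 < U i i) ∧ V.IsDiag ∧ (∀ j, 0 < V j j) :=
  kronecker_diagonal_factors_general c r hc hr U V hU hV hdiag
end

section
/- If A is an rc×rc symmetric positive definite matrix that equals a Kronecker product U ⊗ V of symmetric matrices U (c×c) and V (r×r) with U_{1,1} > 0, then there is a choice of sign s ∈ {1, −1} such that sU and sV are both positive definite. -/
/-!
On a pure tensor `u ⊗ x` the quadratic form of `U ⊗ V` factors as `(uᵀ U u) (xᵀ V x)`.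
Taking `u = e₁`, where the first factor is `U₁₁ > 0`, shows that `V` is positive definite;
then any `x ≠ 0` has `xᵀ V x > 0`, which in turn shows that `U` is positive definite.
So the sign `s = 1` works.
-/

open Matrix
open scoped Kronecker

namespace Matrix

variable {l m n p R : Type*}

def kroneckerVec [Mul R] (u : m → R) (x : n → R) : m × n → R := fun q => u q.1 * x q.2

theorem kroneckerVec_ne_zero [MulZeroClass R] [NoZeroDivisors R]
    {u : m → R} {x : n → R} (hu : u ≠ 0) (hx : x ≠ 0) : kroneckerVec u x ≠ 0 := by
  obtain ⟨i, hi⟩ := Function.ne_iff.mp hu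
  obtain ⟨j, hj⟩ := Function.ne_iff.mp hx
  exact Function.ne_iff.mpr ⟨(i, j), mul_ne_zero hi hj⟩

section CommSemiring

variable [CommSemiring R]

theorem star_kroneckerVec [StarRing R] (u : m → R) (x : n → R) :
    star (kroneckerVec u x) = kroneckerVec (star u) (star x) :=
  funext fun _ => star_mul' _ _

theorem kronecker_mulVec_kroneckerVec [Fintype m] [Fintype p]
    (A : Matrix l m R) (B : Matrix n p R) (u : m → R) (x : p → R) :
    (A ⊗ₖ B) *ᵥ kroneckerVec u x = kroneckerVec (A *ᵥ u) (B *ᵥ x) := by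
  ext ⟨i, j⟩
  simp only [kroneckerVec, mulVec, dotProduct, kroneckerMap_apply, Fintype.sum_prod_type,
    Finset.sum_mul_sum]
  exact Finset.sum_congr rfl fun _ _ => Finset.sum_congr rfl fun _ _ => by ring

theorem kroneckerVec_dotProduct_kroneckerVec [Fintype m] [Fintype n]
    (u v : m → R) (x y : n → R) :
    kroneckerVec u x ⬝ᵥ kroneckerVec v y = (u ⬝ᵥ v) * (x ⬝ᵥ y) := by
  simp only [kroneckerVec, dotProduct, Fintype.sum_prod_type, Finset.sum_mul_sum]
  exact Finset.sum_congr rfl fun _ _ => Finset.sum_congr rfl fun _ _ => by ring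

theorem star_kroneckerVec_dotProduct_kronecker_mulVec [StarRing R] [Fintype m] [Fintype n]
    (A : Matrix m m R) (B : Matrix n n R) (u : m → R) (x : n → R) :
    star (kroneckerVec u x) ⬝ᵥ (A ⊗ₖ B) *ᵥ kroneckerVec u x
      = (star u ⬝ᵥ A *ᵥ u) * (star x ⬝ᵥ B *ᵥ x) := by
  rw [star_kroneckerVec, kronecker_mulVec_kroneckerVec, kroneckerVec_dotProduct_kroneckerVec]

end CommSemiring

theorem star_single_one_dotProduct_mulVec_single_one [Fintype n] [DecidableEq n] [Semiring R]
    [StarRing R] (A : Matrix n n R) (i : n) :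
    star (Pi.single i 1) ⬝ᵥ A *ᵥ Pi.single i 1 = A i i := by
  rw [← Pi.single_star, star_one, mulVec_single_one, single_one_dotProduct, col_apply]

namespace PosDef

variable [CommRing R] [PartialOrder R] [StarRing R] [NoZeroDivisors R] [PosMulReflectLT R]
  [Fintype m] [Fintype n] {A : Matrix m m R} {B : Matrix n n R}

theorem of_kronecker_right (hAB : (A ⊗ₖ B).PosDef) (hB : B.IsHermitian) {u : m → R}
    (hu : 0 < star u ⬝ᵥ A *ᵥ u) : B.PosDef := by
  have hu0 : u ≠ 0 := by rintro rfl; simp at hu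
  refine of_dotProduct_mulVec_pos hB fun x hx => pos_of_mul_pos_right ?_ hu.le
  rw [← star_kroneckerVec_dotProduct_kronecker_mulVec]
  exact hAB.dotProduct_mulVec_pos (kroneckerVec_ne_zero hu0 hx)

theorem of_kronecker_left (hAB : (A ⊗ₖ B).PosDef) (hA : A.IsHermitian) {x : n → R}
    (hx : 0 < star x ⬝ᵥ B *ᵥ x) : A.PosDef := by
  have hx0 : x ≠ 0 := by rintro rfl; simp at hx
  refine of_dotProduct_mulVec_pos hA fun u hu => pos_of_mul_pos_right ?_ hx.le
  rw [mul_comm, ← star_kroneckerVec_dotProduct_kronecker_mulVec]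
  exact hAB.dotProduct_mulVec_pos (kroneckerVec_ne_zero hu hx0)

end PosDef

end Matrix

theorem kronecker_posDef_factor_signs (c r : ℕ) (hc : 0 < c) (hr : 0 < r)
    (U : Matrix (Fin c) (Fin c) ℝ) (V : Matrix (Fin r) (Fin r) ℝ)
    (hUsymm : U.IsSymm) (hVsymm : V.IsSymm)
    (hU11 : 0 < U ⟨0, hc⟩ ⟨0, hc⟩)
    (hA : (U ⊗ₖ V).PosDef) :
    ∃ s : ℝ, (s = 1 ∨ s = -1) ∧ (s • U).PosDef ∧ (s • V).PosDef := by
  have hV : V.PosDef := hA.of_kronecker_right (isHermitian_iff_isSymm.mpr hVsymm)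
    ((star_single_one_dotProduct_mulVec_single_one U _).symm ▸ hU11)
  have hU : U.PosDef := hA.of_kronecker_left (isHermitian_iff_isSymm.mpr hUsymm)
    ((star_single_one_dotProduct_mulVec_single_one V ⟨0, hr⟩).symm ▸ hV.diag_pos)
  exact ⟨1, Or.inl rfl, by rwa [one_smul], by rwa [one_smul]⟩
end
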